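/- For any λ ≥ 0, the threshold classifier 𝒮_λ^*(x) = {k : η_k(x) > λ} minimizes the penalized risk R_λ(S) = ℰ(S) + λ·ℐ(S) over all set-valued classifiers: for every set-valued classifier S, R_λ(𝒮_λ^*) ≤ R_λ(S). -/
import Mathlib


open MeasureTheory Finset

/-- Error rate of a set-valued classifier: `ℰ(S) = ∫ (1 − ∑_{k∈S(x)} η_k(x)) dμ(x)`. -/
noncomputable def errRate {𝒳 : Type*} [MeasurableSpace 𝒳] (μ : Measure 𝒳) {C : ℕ}
    (η : 𝒳 → Fin C → ℝ) (S : 𝒳 → Finset (Fin C)) : ℝ :=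
  ∫ x, (1 - ∑ k ∈ S x, η x k) ∂μ

/-- Average set size of a set-valued classifier: `ℐ(S) = ∫ |S(x)| dμ(x)`. -/
noncomputable def avgSize {𝒳 : Type*} [MeasurableSpace 𝒳] (μ : Measure 𝒳) {C : ℕ}
    (S : 𝒳 → Finset (Fin C)) : ℝ :=
  ∫ x, ((S x).card : ℝ) ∂μ

/-- `G_η(λ) = ∑_{k=1}^C μ{x : η_k(x) > λ}`. -/
noncomputable def Gfun {𝒳 : Type*} [MeasurableSpace 𝒳] (μ : Measure 𝒳) {C : ℕ}
    (η : 𝒳 → Fin C → ℝ) (lam : ℝ) : ℝ :=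
  ∑ k : Fin C, (μ {x | lam < η x k}).toReal

/-- `λ_𝒦 = min {λ ∈ [0,1] : G_η(λ) ≤ 𝒦}` (as an infimum). -/
noncomputable def lamThresh {𝒳 : Type*} [MeasurableSpace 𝒳] (μ : Measure 𝒳) {C : ℕ}
    (η : 𝒳 → Fin C → ℝ) (K : ℝ) : ℝ :=
  sInf {lam : ℝ | lam ∈ Set.Icc (0 : ℝ) 1 ∧ Gfun μ η lam ≤ K}

/-- `𝒮_𝒦^+(x) = {k : η_k(x) > λ_𝒦}`. -/
noncomputable def Splus {𝒳 : Type*} [MeasurableSpace 𝒳] (μ : Measure 𝒳) {C : ℕ}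
    (η : 𝒳 → Fin C → ℝ) (K : ℝ) : 𝒳 → Finset (Fin C) :=
  fun x => Finset.univ.filter (fun k => lamThresh μ η K < η x k)

private lemma integ_of_bound {𝒳 : Type*} [MeasurableSpace 𝒳] (μ : Measure 𝒳)
    [IsFiniteMeasure μ] {f : 𝒳 → ℝ} (hf : Measurable f) (M : ℝ) (h : ∀ x, |f x| ≤ M) :
    Integrable f μ :=
  (integrable_const M).mono' hf.aestronglyMeasurable (ae_of_all _ fun x => by
    simpa using h x)

private lemma sum_mem_eq {C : ℕ} {𝒳 : Type*} (η : 𝒳 → Fin C → ℝ) (T : 𝒳 → Finset (Fin C))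
    (x : 𝒳) : ∑ k ∈ T x, η x k = ∑ k : Fin C, if k ∈ T x then η x k else 0 := by
  rw [Finset.sum_ite_mem, Finset.univ_inter]

/-- for any `λ ≥ 0`, the threshold classifier
`𝒮_λ^*(x) = {k : η_k(x) > λ}` minimizes the penalized risk `R_λ(S) = ℰ(S) + λ·ℐ(S)`
over all (measurable) set-valued classifiers. -/
theorem stmt_19 {𝒳 : Type*} [MeasurableSpace 𝒳] (μ : Measure 𝒳) [IsProbabilityMeasure μ]
    {C : ℕ} (η : 𝒳 → Fin C → ℝ)
    (hη : ∀ k, Measurable fun x => η x k)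
    (hη0 : ∀ x k, 0 ≤ η x k) (hη1 : ∀ x, ∑ k, η x k = 1)
    (lam : ℝ) (hlam : 0 ≤ lam)
    (S : 𝒳 → Finset (Fin C))
    (hS_meas : ∀ k, MeasurableSet {x | k ∈ S x}) :
    errRate μ η (fun x => Finset.univ.filter (fun k => lam < η x k))
        + lam * avgSize μ (fun x => Finset.univ.filter (fun k => lam < η x k))
      ≤ errRate μ η S + lam * avgSize μ S := by
  classical
  have hub : ∀ x k, η x k ≤ 1 := by
    intro x k
    calc η x k ≤ ∑ j, η x j := Finset.single_le_sum (fun j _ => hη0 x j) (Finset.mem_univ k)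
    _ = 1 := hη1 x
  -- general integrability facts
  have key : ∀ (T : 𝒳 → Finset (Fin C)), (∀ k, MeasurableSet {x | k ∈ T x}) →
      Integrable (fun x => 1 - ∑ k ∈ T x, η x k) μ ∧
      Integrable (fun x => ((T x).card : ℝ)) μ := by
    intro T hT
    have hmeas : Measurable (fun x => ∑ k ∈ T x, η x k) := by
      have : (fun x => ∑ k ∈ T x, η x k)
          = fun x => ∑ k : Fin C, if k ∈ T x then η x k else 0 := by
        funext x; exact sum_mem_eq η T x
      rw [this]
      exact Finset.measurable_sum _ fun k _ => Measurable.ite (hT k) (hη k) measurable_const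
    have hbnd : ∀ x, |∑ k ∈ T x, η x k| ≤ C := by
      intro x
      rw [abs_of_nonneg (Finset.sum_nonneg fun k _ => hη0 x k)]
      calc ∑ k ∈ T x, η x k ≤ ∑ k ∈ T x, 1 :=
            Finset.sum_le_sum fun k _ => hub x k
        _ = (T x).card := by simp
        _ ≤ C := by exact_mod_cast Finset.card_le_card (Finset.subset_univ _)
          |>.trans_eq (by simp)
    have hcmeas : Measurable (fun x => ((T x).card : ℝ)) := by
      have : (fun x => ((T x).card : ℝ))
          = fun x => ∑ k : Fin C, if k ∈ T x then (1 : ℝ) else 0 := by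
        funext x
        rw [Finset.sum_ite_mem, Finset.univ_inter]
        simp
      rw [this]
      exact Finset.measurable_sum _ fun k _ =>
        Measurable.ite (hT k) measurable_const measurable_const
    refine ⟨integ_of_bound μ ((measurable_const.sub hmeas)) (1 + C) ?_,
      integ_of_bound μ hcmeas C ?_⟩
    · intro x
      calc |1 - ∑ k ∈ T x, η x k| ≤ |(1 : ℝ)| + |∑ k ∈ T x, η x k| := abs_sub _ _
        _ ≤ 1 + C := by simpa using hbnd x
    · intro x
      rw [abs_of_nonneg (by positivity)]
      exact_mod_cast (Finset.card_le_card (Finset.subset_univ _)).trans_eq (by simp)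
  set Sstar : 𝒳 → Finset (Fin C) := fun x => Finset.univ.filter (fun k => lam < η x k)
    with hSstar
  have hSstar_meas : ∀ k, MeasurableSet {x | k ∈ Sstar x} := by
    intro k
    have : {x | k ∈ Sstar x} = {x | lam < η x k} := by
      ext x; simp [hSstar]
    rw [this]
    exact measurableSet_lt measurable_const (hη k)
  obtain ⟨h1s, h2s⟩ := key Sstar hSstar_meas
  obtain ⟨h1, h2⟩ := key S hS_meas
  have comb : ∀ (T : 𝒳 → Finset (Fin C)),
      Integrable (fun x => 1 - ∑ k ∈ T x, η x k) μ →
      Integrable (fun x => ((T x).card : ℝ)) μ →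
      errRate μ η T + lam * avgSize μ T
        = ∫ x, ((1 - ∑ k ∈ T x, η x k) + lam * (T x).card) ∂μ := by
    intro T hA hB
    rw [errRate, avgSize, ← integral_const_mul, ← integral_add hA (hB.const_mul lam)]
  rw [comb Sstar h1s h2s, comb S h1 h2]
  refine integral_mono (h1s.add (h2s.const_mul lam)) (h1.add (h2.const_mul lam)) ?_
  intro x
  -- pointwise inequality
  have rewr : ∀ (A : Finset (Fin C)),
      (1 - ∑ k ∈ A, η x k) + lam * A.card = 1 + ∑ k ∈ A, (lam - η x k) := by
    intro A
    rw [Finset.sum_sub_distrib, Finset.sum_const, nsmul_eq_mul]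
    ring
  simp only [rewr]
  have h1 : ∑ k ∈ Sstar x, (lam - η x k) ≤ ∑ k ∈ Sstar x ∩ S x, (lam - η x k) := by
    rw [← Finset.sum_inter_add_sum_sdiff (Sstar x) (S x) (fun k => lam - η x k)]
    have : ∑ k ∈ Sstar x \ S x, (lam - η x k) ≤ 0 := by
      apply Finset.sum_nonpos
      intro k hk
      have hk' : k ∈ Sstar x := (Finset.mem_sdiff.mp hk).1
      have : lam < η x k := by simpa [hSstar] using hk'
      linarith
    linarith
  have h2 : ∑ k ∈ Sstar x ∩ S x, (lam - η x k) ≤ ∑ k ∈ S x, (lam - η x k) := by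
    apply Finset.sum_le_sum_of_subset_of_nonneg (Finset.inter_subset_right)
    intro k hk hk'
    have : ¬ lam < η x k := by
      intro h
      exact hk' (Finset.mem_inter.mpr ⟨by simp [hSstar, h], hk⟩)
    linarith [not_lt.mp this]
  linarith
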